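/- arXiv:math/0105189 — 3 statements merged into one kernel-verified Lean document; each statement's English description precedes it below -/
import Mathlib

section
/- The odd power sums p_1, p_3, p_5, ..., p_{2g-1} are algebraically independent over Q in the polynomial ring Q[x_1, ..., x_g]; that is, if F in Q[T_1, ..., T_g] satisfies F(p_1, p_3, ..., p_{2g-1}) = 0 in Q[x_1, ..., x_g], then F = 0. -/
/-!
The Jacobian criterion in characteristic zero: if the Jacobian determinant of `f₁, …, fₙ` is
nonzero, then applying the chain rule to a relation `F(f) = 0` gives a linear system with that
Jacobian matrix, forcing `(∂ⱼF)(f) = 0` for every `j`. The partial derivatives are relations of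
smaller total degree, so by induction they vanish, hence `F` is a constant, hence zero.
For the odd power sums the Jacobian factors as `diag(2j+1)` times a Vandermonde matrix in the
`xᵢ²`, which is invertible because the `xᵢ²` are distinct.
-/

open MvPolynomial Matrix

namespace MvPolynomial

section CommSemiring

variable {R σ τ : Type*} [CommSemiring R]

theorem pderiv_aeval [Fintype σ] (f : σ → MvPolynomial τ R) (F : MvPolynomial σ R) (i : τ) :
    pderiv i (aeval f F) = ∑ j, aeval f (pderiv j F) * pderiv i (f j) := by
  classical
  induction F using MvPolynomial.induction_on with
  | C a => simp
  | add p q hp hq => simp only [map_add, hp, hq, Finset.sum_add_distrib, add_mul]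
  | mul_X p j hp =>
    simp only [map_mul, aeval_X, Derivation.leibniz, hp, smul_eq_mul, pderiv_X, Pi.single_apply]
    simp [add_mul, Finset.sum_add_distrib, Finset.mul_sum, mul_assoc, apply_ite (aeval f),
      -aeval_eq_bind₁]

noncomputable def jacobian (f : σ → MvPolynomial τ R) : Matrix σ τ (MvPolynomial τ R) :=
  Matrix.of fun j i => pderiv i (f j)

theorem vecMul_jacobian [Fintype σ] (f : σ → MvPolynomial τ R) (F : MvPolynomial σ R) :
    (fun j => aeval f (pderiv j F)) ᵥ* jacobian f = fun i => pderiv i (aeval f F) := by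
  ext1 i
  simp only [pderiv_aeval, vecMul, dotProduct, jacobian, of_apply]

theorem pderiv_psum [Fintype σ] (i : σ) (n : ℕ) :
    pderiv i (psum σ R n) = (n : MvPolynomial σ R) * X i ^ (n - 1) := by
  classical
  simp [psum, pderiv_X, Pi.single_apply]

theorem totalDegree_pderiv_lt {i : σ} {p : MvPolynomial σ R} (hp : pderiv i p ≠ 0) :
    (pderiv i p).totalDegree < p.totalDegree := by
  obtain ⟨m, hm, hdeg⟩ := Finset.exists_mem_eq_sup _ (support_nonempty.2 hp)
    fun s : σ →₀ ℕ => s.sum fun _ e => e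
  have hm' : m + Finsupp.single i 1 ∈ p.support := by
    rw [mem_support_iff, coeff_pderiv] at hm
    exact mem_support_iff.2 (left_ne_zero_of_mul hm)
  have := le_totalDegree hm'
  rw [Finsupp.sum_add_index' (fun _ => rfl) (fun _ _ _ => rfl), Finsupp.sum_single_index rfl]
    at this
  rw [totalDegree, hdeg]
  omega

end CommSemiring

section CharZero

variable {R σ : Type*} [CommRing R] [IsDomain R] [CharZero R]

theorem eq_C_of_forall_pderiv_eq_zero {p : MvPolynomial σ R} (h : ∀ i, pderiv i p = 0) :
    p = C (coeff 0 p) := by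
  classical
  ext m
  rw [coeff_C]
  split_ifs with hm
  · rw [hm]
  obtain ⟨i, hi⟩ : ∃ i, m i ≠ 0 := by
    by_contra! h'
    exact hm (Finsupp.ext h').symm
  obtain ⟨m', rfl⟩ : ∃ m', m = m' + Finsupp.single i 1 :=
    ⟨m - Finsupp.single i 1,
      (tsub_add_cancel_of_le (Finsupp.single_le_iff.2 (Nat.one_le_iff_ne_zero.2 hi))).symm⟩
  have := coeff_pderiv (i := i) p m'
  rw [h i, coeff_zero, eq_comm] at this
  exact (mul_eq_zero.1 this).resolve_right (Nat.cast_add_one_ne_zero _)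

variable [Fintype σ] [DecidableEq σ]

theorem algebraicIndependent_of_det_jacobian_ne_zero {f : σ → MvPolynomial σ R}
    (hf : (jacobian f).det ≠ 0) : AlgebraicIndependent R f := by
  refine algebraicIndependent_iff.2 fun F hF => ?_
  induction hn : F.totalDegree using Nat.strong_induction_on generalizing F with
  | _ n ih =>
    have hrel : ∀ j, aeval f (pderiv j F) = 0 := by
      refine congrFun (eq_zero_of_vecMul_eq_zero hf ?_)
      simp only [vecMul_jacobian, hF, map_zero]
      rfl
    have hderiv : ∀ j, pderiv j F = 0 := fun j => by
      by_contra hj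
      exact hj (ih _ (hn ▸ totalDegree_pderiv_lt hj) _ (hrel j) rfl)
    have hC := eq_C_of_forall_pderiv_eq_zero hderiv
    rw [hC, aeval_C, algebraMap_eq, C_eq_zero] at hF
    rw [hC, hF, map_zero]

end CharZero

section PowerSums

variable {R : Type*} [CommRing R] {n k : ℕ}

theorem jacobian_psum_mul_add_one :
    jacobian (fun j : Fin n => psum (Fin n) R (k * j + 1)) =
      diagonal (fun j : Fin n => ((k * j + 1 : ℕ) : MvPolynomial (Fin n) R)) *
        (vandermonde fun i => X i ^ k)ᵀ := by
  ext j i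
  simp [jacobian, pderiv_psum, vandermonde, pow_mul]

theorem algebraicIndependent_psum_mul_add_one [IsDomain R] [CharZero R] (hk : k ≠ 0) :
    AlgebraicIndependent R (fun j : Fin n => psum (Fin n) R (k * j + 1)) := by
  refine algebraicIndependent_of_det_jacobian_ne_zero ?_
  rw [jacobian_psum_mul_add_one, det_mul, det_diagonal, det_transpose]
  refine mul_ne_zero (Finset.prod_ne_zero_iff.2 fun j _ => Nat.cast_ne_zero.2 (Nat.succ_ne_zero _))
    (det_vandermonde_ne_zero_iff.2 fun i j hij => ?_)
  simpa [X_pow_eq_monomial, Finsupp.single_left_inj hk] using hij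

end PowerSums

end MvPolynomial

theorem odd_power_sums_algebraically_independent_general (g : ℕ)
    (F : MvPolynomial (Fin g) ℚ)
    (hF : aeval (fun j : Fin g => psum (Fin g) ℚ (2 * (j : ℕ) + 1)) F = 0) :
    F = 0 :=
  (algebraicIndependent_psum_mul_add_one two_ne_zero).eq_zero_of_aeval_eq_zero F hF

/-- The odd power sums `p_1, p_3, …, p_{2g-1}` are algebraically independent over `ℚ`
in `ℚ[x_1, …, x_g]`: if `F(p_1, p_3, …, p_{2g-1}) = 0` then `F = 0`.
(Here the zero-based `j`-th power sum used is `p_{2j+1}`.) -/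
theorem odd_power_sums_algebraically_independent (g : ℕ) (hg : 0 < g)
    (F : MvPolynomial (Fin g) ℚ)
    (hF : aeval (fun j : Fin g => psum (Fin g) ℚ (2 * (j : ℕ) + 1)) F = 0) :
    F = 0 :=
  odd_power_sums_algebraically_independent_general g F hF
end

section
/- Every (m+1) x (m+1) matrix with entries in Q[xi_1, ..., xi_m], each of whose rows is an admissible row, has determinant equal to 0. -/
/-!
The vector `(e_m, …, e_1, e_0)` is a nonzero kernel vector of every such matrix: the product of
the admissible row ending in `ρ_k` with it is `(-1)^k ∑_i (-1)^i e_i h_{k-i}`, and this vanishes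
for `k ≥ 1`. Indeed, expanding `e_i h_{k-i}` into monomials, the coefficient of a monomial `x^ν`
of degree `k` is `∑_{S ⊆ supp ν} (-1)^|S|`, which is `0` because `supp ν` is nonempty.
-/

open MvPolynomial

/-- `ρ_k = (-1)^k h_k`, with `ρ_k = 0` for `k < 0`. -/
noncomputable def SWrho (m : ℕ) (k : ℤ) : MvPolynomial (Fin m) ℚ :=
  if 0 ≤ k then C ((-1 : ℚ) ^ k) * hsymm (Fin m) ℚ k.toNat else 0

open Finset

theorem Finset.sum_powerset_neg_one_pow_card_eq_zero {α A : Type*} [Ring A] {T : Finset α}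
    (hT : T.Nonempty) : ∑ S ∈ T.powerset, (-1 : A) ^ #S = 0 := by
  exact_mod_cast congrArg (Int.cast : ℤ → A) (sum_powerset_neg_one_pow_card_of_nonempty hT)

theorem Finset.val_le_iff_subset_toFinset {α : Type*} [DecidableEq α] {S : Finset α}
    {t : Multiset α} : S.val ≤ t ↔ S ⊆ t.toFinset := by
  simp [val_le_iff_val_subset, Finset.subset_iff, Multiset.subset_iff]

namespace MvPolynomial

variable {σ R : Type*} [Fintype σ] [CommRing R]

theorem esymm_eq_zero_of_card_lt {n : ℕ} (h : Fintype.card σ < n) : esymm σ R n = 0 := by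
  rw [esymm, powersetCard_eq_empty.mpr (by simpa using h), sum_empty]

theorem multiset_prod_map_X_mul_hsymm [DecidableEq σ] (s : Multiset σ) {n : ℕ}
    (hs : Multiset.card s ≤ n) :
    (s.map X).prod * hsymm σ R (n - Multiset.card s) =
      ∑ ν ∈ univ.filter (fun ν : Sym σ n => s ≤ ν), ((ν : Multiset σ).map X).prod := by
  rw [hsymm, mul_sum]
  refine sum_bij' (fun μ _ => Sym.mk (s + μ) (by simp [hs]))
    (fun (ν : Sym σ n) hν =>
      Sym.mk (ν - s) (by rw [Multiset.card_sub (mem_filter.mp hν).2, Sym.card_coe]))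
    (fun μ _ => by simp) (fun ν _ => mem_univ _)
    (fun μ _ => Sym.coe_injective (add_tsub_cancel_left s μ))
    (fun ν hν => Sym.coe_injective (add_tsub_cancel_of_le (mem_filter.mp hν).2))
    (fun μ _ => by simp)

theorem sum_range_esymm_mul_hsymm_eq_sum_finset [DecidableEq σ] (n : ℕ) :
    ∑ i ∈ range (n + 1), (-1) ^ i * esymm σ R i * hsymm σ R (n - i) =
      ∑ S : Finset σ with #S ≤ n, (-1) ^ #S * ((S.val.map X).prod * hsymm σ R (n - #S)) := by
  rw [← sum_fiberwise_of_maps_to (g := card) (t := range (n + 1))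
    (fun S hS => by simpa [Nat.lt_succ_iff] using hS)]
  refine sum_congr rfl fun i hi => ?_
  have hfiber : (univ.filter (fun S : Finset σ => #S ≤ n)).filter (fun S => #S = i) =
      powersetCard i univ := by
    ext S
    simp only [mem_filter, mem_univ, true_and, mem_powersetCard_univ]
    exact ⟨And.right, fun h => ⟨h ▸ Nat.lt_succ_iff.mp (mem_range.mp hi), h⟩⟩
  rw [hfiber, esymm, mul_sum, sum_mul]
  refine sum_congr rfl fun S hS => ?_
  rw [mem_powersetCard_univ.mp hS, prod_eq_multiset_prod, mul_assoc]

theorem sum_range_neg_one_pow_mul_esymm_mul_hsymm [DecidableEq σ] {n : ℕ} (hn : n ≠ 0) :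
    ∑ i ∈ range (n + 1), (-1) ^ i * esymm σ R i * hsymm σ R (n - i) = 0 := by
  have mem_iff (S : Finset σ) (ν : Sym σ n) :
      (#S ≤ n ∧ S.val ≤ ν) ↔ S ⊆ (ν : Multiset σ).toFinset := by
    rw [← val_le_iff_subset_toFinset, and_iff_right_iff_imp]
    intro h
    simpa using Multiset.card_le_card h
  have support_nonempty (ν : Sym σ n) : (ν : Multiset σ).toFinset.Nonempty :=
    Multiset.toFinset_nonempty.mpr (Multiset.card_pos.mp (by rw [Sym.card_coe]; omega))
  calc _ = ∑ S : Finset σ with #S ≤ n, ∑ ν ∈ univ.filter (fun ν : Sym σ n => S.val ≤ ν),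
          (-1) ^ #S * ((ν : Multiset σ).map X).prod := by
        rw [sum_range_esymm_mul_hsymm_eq_sum_finset]
        refine sum_congr rfl fun S hS => ?_
        rw [← card_val, multiset_prod_map_X_mul_hsymm S.val (mem_filter.mp hS).2, mul_sum]
    _ = ∑ ν : Sym σ n, ∑ S ∈ (ν : Multiset σ).toFinset.powerset,
          (-1) ^ #S * ((ν : Multiset σ).map X).prod :=
        sum_comm' fun S ν => by simpa [and_comm] using mem_iff S ν
    _ = 0 := sum_eq_zero fun ν _ => by
        rw [← sum_mul, sum_powerset_neg_one_pow_card_eq_zero (support_nonempty ν), zero_mul]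

end MvPolynomial

theorem SWrho_natCast (m n : ℕ) : SWrho m n = (-1) ^ n * hsymm (Fin m) ℚ n := by
  simp [SWrho]

theorem SWrho_of_neg (m : ℕ) {k : ℤ} (hk : k < 0) : SWrho m k = 0 := by
  simp [SWrho, not_le.mpr hk]

theorem SWrho_sub_mul_esymm (m : ℕ) {N i : ℕ} (hi : i ≤ N) :
    SWrho m (N - i) * esymm (Fin m) ℚ i =
      (-1) ^ N * ((-1) ^ i * esymm (Fin m) ℚ i * hsymm (Fin m) ℚ (N - i)) := by
  obtain ⟨j, rfl⟩ := Nat.exists_eq_add_of_le hi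
  have hj : ((i + j : ℕ) : ℤ) - i = j := by push_cast; ring
  have hsq : (-1 : MvPolynomial (Fin m) ℚ) ^ i * (-1) ^ i = 1 := by
    rw [← mul_pow, neg_one_mul, neg_neg, one_pow]
  rw [hj, SWrho_natCast, Nat.add_sub_cancel_left, pow_add]
  linear_combination (-(-1) ^ j * hsymm (Fin m) ℚ j * esymm (Fin m) ℚ i) * hsq

theorem sum_range_SWrho_sub_mul_esymm (m : ℕ) {k : ℤ} (hk : 1 ≤ k) :
    ∑ i ∈ range (m + 1), SWrho m (k - i) * esymm (Fin m) ℚ i = 0 := by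
  lift k to ℕ using by omega
  set f : ℕ → MvPolynomial (Fin m) ℚ := fun i => SWrho m (k - i) * esymm (Fin m) ℚ i
  have hf_of_k_lt {i : ℕ} (hi : k < i) : f i = 0 := by
    simp only [f, SWrho_of_neg m (by omega : (k : ℤ) - i < 0), zero_mul]
  have hf_of_m_lt {i : ℕ} (hi : m < i) : f i = 0 := by
    simp only [f, esymm_eq_zero_of_card_lt (σ := Fin m) (R := ℚ) (by simpa using hi), mul_zero]
  calc ∑ i ∈ range (m + 1), f i = ∑ i ∈ range (m + k + 1), f i := by
        refine sum_subset (range_subset_range.mpr (by omega)) fun i hi hi' => hf_of_m_lt ?_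
        simp only [mem_range] at hi hi'
        omega
    _ = ∑ i ∈ range (k + 1), f i := by
        refine (sum_subset (range_subset_range.mpr (by omega)) fun i hi hi' =>
          hf_of_k_lt ?_).symm
        simp only [mem_range] at hi hi'
        omega
    _ = (-1) ^ k * ∑ i ∈ range (k + 1),
          (-1) ^ i * esymm (Fin m) ℚ i * hsymm (Fin m) ℚ (k - i) := by
        rw [mul_sum]
        exact sum_congr rfl fun i hi =>
          SWrho_sub_mul_esymm m (by simpa [Nat.lt_succ_iff] using hi)
    _ = 0 := by
        rw [sum_range_neg_one_pow_mul_esymm_mul_hsymm (by omega), mul_zero]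

theorem sum_SWrho_mul_esymm_rev (m : ℕ) {k : ℤ} (hk : 1 ≤ k) :
    ∑ j : Fin (m + 1), SWrho m (k - m + (j : ℕ)) * esymm (Fin m) ℚ (m - j) = 0 := by
  rw [Fin.sum_univ_eq_sum_range (fun j => SWrho m (k - m + j) * esymm (Fin m) ℚ (m - j)),
    ← sum_range_reflect, ← sum_range_SWrho_sub_mul_esymm m hk]
  refine sum_congr rfl fun i hi => ?_
  have him : i ≤ m := Nat.lt_succ_iff.mp (mem_range.mp hi)
  rw [Nat.add_sub_cancel, Nat.sub_sub_self him, Nat.cast_sub him, sub_add_sub_cancel]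

theorem det_fundamental_matrix_eq_zero_general (m : ℕ)
    (M : Matrix (Fin (m + 1)) (Fin (m + 1)) (MvPolynomial (Fin m) ℚ))
    (hM : ∀ i, ∃ k : ℤ, 1 ≤ k ∧ ∀ j, M i j = SWrho m (k - m + (j : ℕ))) :
    M.det = 0 := by
  rw [← Matrix.exists_mulVec_eq_zero_iff]
  refine ⟨fun j => esymm (Fin m) ℚ (m - j), fun h => ?_, funext fun i => ?_⟩
  · simpa using congrFun h (Fin.last m)
  · obtain ⟨k, hk, hrow⟩ := hM i
    simp only [Matrix.mulVec, dotProduct, hrow, Pi.zero_apply]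
    exact sum_SWrho_mul_esymm_rev m hk

/-- Every `(m+1) × (m+1)` matrix each of whose rows is an admissible row
`(ρ_{k-m}, ρ_{k-m+1}, …, ρ_k)` for some `k ≥ 1` has determinant `0`. -/
theorem det_fundamental_matrix_eq_zero (m : ℕ) (hm : 1 ≤ m)
    (M : Matrix (Fin (m + 1)) (Fin (m + 1)) (MvPolynomial (Fin m) ℚ))
    (hM : ∀ i, ∃ k : ℤ, 1 ≤ k ∧ ∀ j, M i j = SWrho m (k - m + (j : ℕ))) :
    M.det = 0 :=
  det_fundamental_matrix_eq_zero_general m M hM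
end

section
/- Let N >= 1 and let r, s >= 0 be integers with r + s = N and s <= r + 2. Let f : R -> R be infinitely differentiable and let x_0 be a real number. Let M be the N x N real matrix whose i-th row (1 <= i <= N) is: for 1 <= k <= r, the k-th column entry is the i-th derivative of the function x |-> x^k evaluated at x_0, and for 0 <= k <= s-1, the (r+1+k)-th column entry is the i-th derivative of the function x |-> f(x) * x^k evaluated at x_0. Then det M = (-1)^{s(s-1)/2} * (1! * 2! * ... * N!) * det( f^{(r-s+a+b)}(x_0) / (r-s+a+b)! )_{1 <= a, b <= s}, where f^{(m)} denotes the m-th derivative of f. -/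
open Matrix Equiv

private lemma iterDeriv_add' {n : ℕ} {f g : ℝ → ℝ} (hf : ContDiff ℝ (⊤ : ℕ∞) f)
    (hg : ContDiff ℝ (⊤ : ℕ∞) g) (x : ℝ) :
    iteratedDeriv n (fun y => f y + g y) x = iteratedDeriv n f x + iteratedDeriv n g x := by
  have h := iteratedFDeriv_add_apply (𝕜 := ℝ) (i := n) (hf.of_le (by exact_mod_cast (le_top : ((n:ℕ∞)) ≤ ⊤))).contDiffAt
    (hg.of_le (by exact_mod_cast (le_top : ((n:ℕ∞)) ≤ ⊤))).contDiffAt (x := x)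
  simp only [iteratedDeriv_eq_iteratedFDeriv]
  rw [show (fun y => f y + g y) = f + g from rfl, h]
  rfl

private lemma iterDeriv_smul' {n : ℕ} {g : ℝ → ℝ} (hg : ContDiff ℝ (⊤ : ℕ∞) g) (c x : ℝ) :
    iteratedDeriv n (fun y => c * g y) x = c * iteratedDeriv n g x := by
  have h := iteratedFDeriv_const_smul_apply (𝕜 := ℝ) (i := n) (f := g) (a := c)
    (hg.of_le (by exact_mod_cast (le_top : ((n:ℕ∞)) ≤ ⊤))).contDiffAt (x := x)
  simp only [iteratedDeriv_eq_iteratedFDeriv]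
  rw [show (fun y => c * g y) = c • g from rfl, h]
  rfl

private lemma iterDeriv_const' : ∀ (n : ℕ), n ≠ 0 → ∀ (c x : ℝ),
    iteratedDeriv n (fun _ : ℝ => c) x = 0 := by
  intro n
  induction n with
  | zero => omega
  | succ m ih =>
    intro _ c x
    rw [iteratedDeriv_succ']
    simp only [deriv_const']
    rcases Nat.eq_zero_or_pos m with h | h
    · subst h; simp [iteratedDeriv_zero]
    · exact ih (by omega) 0 x

private lemma iterDeriv_sum {ι : Type*} (t : Finset ι) (F : ι → ℝ → ℝ)
    (hF : ∀ i ∈ t, ContDiff ℝ (⊤ : ℕ∞) (F i)) (n : ℕ) (x : ℝ) :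
    iteratedDeriv n (fun y => ∑ i ∈ t, F i y) x = ∑ i ∈ t, iteratedDeriv n (F i) x := by
  classical
  induction t using Finset.induction with
  | empty =>
    simp only [Finset.sum_empty]
    rcases Nat.eq_zero_or_pos n with h | h
    · subst h; simp
    · exact iterDeriv_const' n (by omega) 0 x
  | insert _ _ hnotmem ih =>
    rename_i a t'
    simp only [Finset.sum_insert hnotmem]
    rw [iterDeriv_add' (hF a (Finset.mem_insert_self a t'))
      (ContDiff.sum fun i hi => hF i (Finset.mem_insert_of_mem hi)) x,
      ih (fun i hi => hF i (Finset.mem_insert_of_mem hi))]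

private lemma key (x₀ : ℝ) : ∀ (n : ℕ) (f : ℝ → ℝ), ContDiff ℝ (⊤ : ℕ∞) f → ∀ (k : ℕ),
    iteratedDeriv n (fun x => f x * (x - x₀) ^ k) x₀ =
      if k ≤ n then (n.choose k : ℝ) * (k.factorial : ℝ) * iteratedDeriv (n - k) f x₀ else 0 := by
  intro n
  induction n with
  | zero =>
    intro f hf k
    match k with
    | 0 => simp
    | k + 1 => simp [sub_self]
  | succ n IH =>
    intro f hf k
    match k with
    | 0 =>
      simp only [pow_zero, mul_one, Nat.zero_le, if_true, Nat.choose_zero_right,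
        Nat.factorial_zero, Nat.cast_one, Nat.sub_zero, one_mul]
    | k + 1 =>
      have hf' : ContDiff ℝ (⊤ : ℕ∞) (deriv f) := (contDiff_infty_iff_deriv.mp hf).2
      have hs1 : ContDiff ℝ (⊤ : ℕ∞) (fun x : ℝ => deriv f x * (x - x₀) ^ (k + 1)) :=
        hf'.mul ((contDiff_id.sub contDiff_const).pow (k + 1))
      have hs2 : ContDiff ℝ (⊤ : ℕ∞) (fun x : ℝ => ((k : ℝ) + 1) * (f x * (x - x₀) ^ k)) :=
        contDiff_const.mul (hf.mul ((contDiff_id.sub contDiff_const).pow k))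
      rw [iteratedDeriv_succ']
      have hd : deriv (fun x => f x * (x - x₀) ^ (k + 1)) = fun x =>
          deriv f x * (x - x₀) ^ (k + 1) + ((k : ℝ) + 1) * (f x * (x - x₀) ^ k) := by
        funext x
        have h1 : HasDerivAt f (deriv f x) x := (hf.differentiable (by simp) x).hasDerivAt
        have h2 : HasDerivAt (fun x : ℝ => (x - x₀) ^ (k + 1))
            (((k:ℕ) + 1 : ℕ) * (x - x₀) ^ k * 1) x :=
          ((hasDerivAt_id x).sub_const x₀).pow (k+1)
        have h2' : HasDerivAt (fun x : ℝ => (x - x₀) ^ (k + 1))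
            (((k : ℝ) + 1) * (x - x₀) ^ k) x := by
          convert h2 using 1; push_cast; ring
        have := h1.fun_mul h2'
        rw [this.deriv]
        ring
      rw [hd, iterDeriv_add' hs1 hs2, iterDeriv_smul'
        (g := fun x => f x * (x - x₀) ^ k) (hf.mul ((contDiff_id.sub contDiff_const).pow k)) _ _,
        IH (deriv f) hf' (k + 1), IH f hf k]
      by_cases hk : k ≤ n
      · have h2 : k + 1 ≤ n + 1 := by omega
        rw [if_pos hk, if_pos h2]
        have hsub : n + 1 - (k + 1) = n - k := by omega
        rw [hsub]
        by_cases hk1 : k + 1 ≤ n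
        · rw [if_pos hk1]
          have hrw : iteratedDeriv (n - (k + 1)) (deriv f) x₀ = iteratedDeriv (n - k) f x₀ := by
            rw [← iteratedDeriv_succ']
            congr 1
            omega
          rw [hrw, Nat.choose_succ_succ n k]
          push_cast [Nat.factorial_succ]
          ring
        · have hkn : k = n := by omega
          subst hkn
          rw [if_neg hk1]
          simp [Nat.choose_succ_self, Nat.factorial_succ]
          push_cast
          ring
      · have h1 : ¬ (k + 1 ≤ n) := by omega
        have h2 : ¬ (k + 1 ≤ n + 1) := by omega
        simp [hk, h1, h2]

private lemma key_pow (x₀ : ℝ) (n k : ℕ) :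
    iteratedDeriv n (fun x : ℝ => (x - x₀) ^ k) x₀ = if n = k then (k.factorial : ℝ) else 0 := by
  have h := key x₀ n (fun _ => (1:ℝ)) contDiff_const k
  simp only [one_mul] at h
  rw [h]
  by_cases hk : k ≤ n
  · rw [if_pos hk]
    by_cases hnk : n = k
    · subst hnk
      simp [iteratedDeriv_zero]
    · rw [if_neg hnk, iterDeriv_const' (n - k) (by omega) 1 x₀]
      ring
  · rw [if_neg hk, if_neg (by omega)]

private lemma sign_revPerm : ∀ (s : ℕ),
    Perm.sign (Fin.revPerm : Perm (Fin s)) = (-1 : ℤˣ) ^ (s * (s - 1) / 2) := by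
  intro s
  induction s with
  | zero =>
    simp [Subsingleton.elim (Fin.revPerm : Perm (Fin 0)) 1]
  | succ n ih =>
    have hdec : (Fin.revPerm : Perm (Fin (n+1))) =
        Perm.decomposeFin.symm (0, (Fin.revPerm : Perm (Fin n))) * finRotate (n+1) := by
      ext j
      simp only [Perm.mul_apply, finRotate_succ_apply]
      induction j using Fin.lastCases with
      | last =>
        have h0 : (Fin.last n) + 1 = 0 := by
          rw [Fin.last_add_one]
        rw [h0, Perm.decomposeFin_symm_apply_zero]
        simp [Fin.rev_last]
      | cast i =>
        have h1 : (Fin.castSucc i) + 1 = i.succ := Fin.coeSucc_eq_succ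
        rw [h1, Perm.decomposeFin_symm_apply_succ]
        simp only [swap_self, Equiv.refl_apply]
        simp only [Fin.revPerm_apply, Fin.val_succ, Fin.val_rev, Fin.coe_castSucc]
        omega
    rw [hdec, _root_.map_mul, Perm.decomposeFin.symm_sign, if_pos rfl, one_mul, ih, sign_finRotate]
    have harith : (n+1) * (n+1-1) / 2 = n * (n-1) / 2 + n := by
      rcases Nat.eq_zero_or_pos n with h | h
      · subst h; rfl
      · have h2 : (n+1) * n = n * (n-1) + 2 * n := by
          cases n with
          | zero => rfl
          | succ m => simp [Nat.succ_sub_one]; ring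
        rw [Nat.add_one_sub_one, h2, Nat.add_mul_div_left _ _ (by norm_num : 0 < 2)]
    rw [harith, pow_add]
    try ring
    rw [Nat.add_sub_cancel_left]

/-- The determinant of the `N × N` matrix whose `(i,k)` entry (1-based `i`, zero-based
column `j`) is the `i`-th derivative at `x₀` of `x ↦ x^{j+1}` for `j < r`, and of
`x ↦ f(x)·x^{j-r}` for `r ≤ j < r + s`, equals
`(-1)^{s(s-1)/2} · 1!2!⋯N! · det ( f^{(r-s+a+b)}(x₀)/(r-s+a+b)! )_{1 ≤ a,b ≤ s}`. -/
theorem det_derivatives_eq_hankel (N r s : ℕ) (hN : 1 ≤ N) (hrs : r + s = N)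
    (hs : s ≤ r + 2) (f : ℝ → ℝ) (hf : ContDiff ℝ (⊤ : ℕ∞) f) (x₀ : ℝ) :
    (Matrix.of fun i j : Fin N =>
        if (j : ℕ) < r then
          iteratedDeriv ((i : ℕ) + 1) (fun x : ℝ => x ^ ((j : ℕ) + 1)) x₀
        else
          iteratedDeriv ((i : ℕ) + 1) (fun x : ℝ => f x * x ^ ((j : ℕ) - r)) x₀).det =
      (-1 : ℝ) ^ (s * (s - 1) / 2) *
        (∏ k ∈ Finset.range N, ((k + 1).factorial : ℝ)) *
        (Matrix.of fun a b : Fin s =>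
          iteratedDeriv (r + 2 - s + (a : ℕ) + (b : ℕ)) f x₀ /
            ((r + 2 - s + (a : ℕ) + (b : ℕ)).factorial : ℝ)).det := by
  classical
  have hf' : ContDiff ℝ (⊤ : ℕ∞) f := hf.of_le (by simp)
  set M : Matrix (Fin N) (Fin N) ℝ := Matrix.of fun i j : Fin N =>
    if (j : ℕ) < r then
      iteratedDeriv ((i : ℕ) + 1) (fun x : ℝ => x ^ ((j : ℕ) + 1)) x₀
    else
      iteratedDeriv ((i : ℕ) + 1) (fun x : ℝ => f x * x ^ ((j : ℕ) - r)) x₀ with hM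
  set H : Matrix (Fin s) (Fin s) ℝ := Matrix.of fun a b : Fin s =>
    iteratedDeriv (r + 2 - s + (a : ℕ) + (b : ℕ)) f x₀ /
      ((r + 2 - s + (a : ℕ) + (b : ℕ)).factorial : ℝ) with hH
  set T : Matrix (Fin N) (Fin N) ℝ := Matrix.of fun m j : Fin N =>
    if (m : ℕ) < r then
      (if (j : ℕ) < r then ((((j:ℕ)+1).choose ((m:ℕ)+1) : ℕ) : ℝ) * (-x₀) ^ ((j:ℕ) - (m:ℕ))
       else 0)
    else
      (if (j : ℕ) < r then 0
       else ((((j:ℕ)-r).choose ((m:ℕ)-r) : ℕ) : ℝ) * (-x₀) ^ ((j:ℕ) - (m:ℕ))) with hT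
  set A : Matrix (Fin N) (Fin N) ℝ := Matrix.of fun i j : Fin N =>
    if (j : ℕ) < r then
      iteratedDeriv ((i:ℕ)+1) (fun x : ℝ => (x - x₀) ^ ((j:ℕ)+1)) x₀
    else
      iteratedDeriv ((i:ℕ)+1) (fun x : ℝ => f x * (x - x₀) ^ ((j:ℕ)-r)) x₀ with hA
  -- Step 1 : M * T = A
  set Phi : Fin N → Fin N → ℕ → ℝ := fun i j m =>
    (if m < r then iteratedDeriv ((i : ℕ) + 1) (fun x : ℝ => x ^ (m + 1)) x₀
      else iteratedDeriv ((i : ℕ) + 1) (fun x : ℝ => f x * x ^ (m - r)) x₀) *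
    (if m < r then
        (if (j : ℕ) < r then ((((j:ℕ)+1).choose (m+1) : ℕ) : ℝ) * (-x₀) ^ ((j:ℕ) - m)
          else 0)
      else
        (if (j : ℕ) < r then 0
          else ((((j:ℕ)-r).choose (m-r) : ℕ) : ℝ) * (-x₀) ^ ((j:ℕ) - m))) with hPhi
  have hMT : M * T = A := by
    ext i j
    rw [Matrix.mul_apply]
    rw [show (∑ m : Fin N, M i m * T m j) = ∑ m ∈ Finset.range N, Phi i j m from
      Fin.sum_univ_eq_sum_range (Phi i j) N]
    simp only [hA, Matrix.of_apply]
    by_cases hj : (j : ℕ) < r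
    · rw [if_pos hj]
      -- RHS: expand (x - x₀)^(j+1)
      have hexp : (fun x : ℝ => (x - x₀) ^ ((j:ℕ)+1)) = fun x : ℝ =>
          ∑ p ∈ Finset.range ((j:ℕ)+1+1),
            ((((j:ℕ)+1).choose p : ℕ) : ℝ) * (-x₀) ^ (((j:ℕ)+1) - p) * x ^ p := by
        funext x
        rw [sub_eq_add_neg, add_pow]
        exact Finset.sum_congr rfl fun p _ => by ring
      rw [hexp, iterDeriv_sum (Finset.range ((j:ℕ)+1+1))
        (fun p => fun x : ℝ => ((((j:ℕ)+1).choose p : ℕ) : ℝ) * (-x₀) ^ (((j:ℕ)+1) - p) * x ^ p)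
        (fun p _ => contDiff_const.mul ((contDiff_id (𝕜 := ℝ)).pow p)) ((i:ℕ)+1) x₀]
      have hsmul : ∀ p : ℕ, iteratedDeriv ((i:ℕ)+1)
          (fun x : ℝ => ((((j:ℕ)+1).choose p : ℕ) : ℝ) * (-x₀) ^ (((j:ℕ)+1) - p) * x ^ p) x₀ =
          ((((j:ℕ)+1).choose p : ℕ) : ℝ) * (-x₀) ^ (((j:ℕ)+1) - p) *
            iteratedDeriv ((i:ℕ)+1) (fun x : ℝ => x ^ p) x₀ := by
        intro p
        have := iterDeriv_smul' (n := (i:ℕ)+1) (g := fun x : ℝ => x ^ p)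
          ((contDiff_id (𝕜 := ℝ)).pow p)
          (((((j:ℕ)+1).choose p : ℕ) : ℝ) * (-x₀) ^ (((j:ℕ)+1) - p)) x₀
        exact this
      simp only [hsmul]
      rw [Finset.sum_range_succ']
      have hzero : ((((j:ℕ)+1).choose 0 : ℕ) : ℝ) * (-x₀) ^ (((j:ℕ)+1) - 0) *
          iteratedDeriv ((i:ℕ)+1) (fun x : ℝ => x ^ 0) x₀ = 0 := by
        rw [show (fun x : ℝ => x ^ 0) = fun _ : ℝ => (1:ℝ) from funext fun x => pow_zero x,
          iterDeriv_const' ((i:ℕ)+1) (by omega) 1 x₀]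
        ring
      rw [hzero, add_zero]
      rw [← Finset.sum_subset (Finset.range_subset_range.mpr (show (j:ℕ)+1 ≤ N by omega))
        (fun m hmN hmj => ?_)]
      · apply Finset.sum_congr rfl
        intro m hm
        have hmj : m < (j:ℕ)+1 := Finset.mem_range.mp hm
        have hmr : m < r := by omega
        simp only [hPhi]
        rw [if_pos hmr, if_pos hmr, if_pos hj, Nat.succ_sub_succ]
        ring
      · -- vanishing terms
        have hmj' : (j:ℕ)+1 ≤ m := by
          by_contra hc
          exact hmj (Finset.mem_range.mpr (by omega))
        simp only [hPhi]
        by_cases hmr : m < r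
        · rw [if_pos hmr, if_pos hmr, if_pos hj,
            Nat.choose_eq_zero_of_lt (by omega : (j:ℕ)+1 < m+1)]
          push_cast
          ring
        · rw [if_neg hmr, if_neg hmr, if_pos hj]
          ring
    · rw [if_neg hj]
      have hjr : r ≤ (j:ℕ) := by omega
      -- RHS: expand f x * (x - x₀)^(j-r)
      have hexp : (fun x : ℝ => f x * (x - x₀) ^ ((j:ℕ)-r)) = fun x : ℝ =>
          ∑ p ∈ Finset.range ((j:ℕ)-r+1),
            ((((j:ℕ)-r).choose p : ℕ) : ℝ) * (-x₀) ^ (((j:ℕ)-r) - p) * (f x * x ^ p) := by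
        funext x
        rw [sub_eq_add_neg, add_pow, Finset.mul_sum]
        exact Finset.sum_congr rfl fun p _ => by ring
      rw [hexp, iterDeriv_sum (Finset.range ((j:ℕ)-r+1))
        (fun p => fun x : ℝ => ((((j:ℕ)-r).choose p : ℕ) : ℝ) * (-x₀) ^ (((j:ℕ)-r) - p)
          * (f x * x ^ p))
        (fun p _ => contDiff_const.mul (hf'.mul ((contDiff_id (𝕜 := ℝ)).pow p))) ((i:ℕ)+1) x₀]
      have hsmul : ∀ p : ℕ, iteratedDeriv ((i:ℕ)+1)
          (fun x : ℝ => ((((j:ℕ)-r).choose p : ℕ) : ℝ) * (-x₀) ^ (((j:ℕ)-r) - p)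
            * (f x * x ^ p)) x₀ =
          ((((j:ℕ)-r).choose p : ℕ) : ℝ) * (-x₀) ^ (((j:ℕ)-r) - p) *
            iteratedDeriv ((i:ℕ)+1) (fun x : ℝ => f x * x ^ p) x₀ := by
        intro p
        exact iterDeriv_smul' (n := (i:ℕ)+1) (g := fun x : ℝ => f x * x ^ p)
          (hf'.mul ((contDiff_id (𝕜 := ℝ)).pow p)) _ _
      simp only [hsmul]
      rw [← Finset.sum_subset (show Finset.Ico r ((j:ℕ)+1) ⊆ Finset.range N by
          intro m hm
          simp only [Finset.mem_Ico] at hm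
          exact Finset.mem_range.mpr (by omega))
        (fun m hmN hmI => ?_)]
      · rw [Finset.sum_Ico_eq_sum_range,
          show (j:ℕ)+1-r = (j:ℕ)-r+1 by omega]
        apply Finset.sum_congr rfl
        intro p hp
        have hpk : p < (j:ℕ)-r+1 := Finset.mem_range.mp hp
        simp only [hPhi]
        rw [if_neg (by omega : ¬ r + p < r), if_neg (by omega : ¬ r + p < r), if_neg hj,
          Nat.add_sub_cancel_left, show (j:ℕ) - (r+p) = ((j:ℕ)-r) - p by omega]
        ring
      · -- vanishing
        simp only [Finset.mem_Ico, not_and, not_lt] at hmI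
        simp only [hPhi]
        by_cases hmr : m < r
        · rw [if_pos hmr, if_pos hmr, if_neg hj]
          ring
        · have hjm : (j:ℕ)+1 ≤ m := hmI (by omega)
          rw [if_neg hmr, if_neg hmr, if_neg hj,
            Nat.choose_eq_zero_of_lt (by omega : (j:ℕ)-r < m-r)]
          push_cast
          ring
  -- Step 2 : det T = 1
  have hdetT : T.det = 1 := by
    have htri : T.BlockTriangular id := by
      intro a b hab
      have hba : (b:ℕ) < (a:ℕ) := hab
      simp only [hT, Matrix.of_apply]
      by_cases har : (a:ℕ) < r
      · rw [if_pos har, if_pos (by omega : (b:ℕ) < r),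
          Nat.choose_eq_zero_of_lt (by omega : (b:ℕ)+1 < (a:ℕ)+1)]
        push_cast
        ring
      · rw [if_neg har]
        by_cases hbr : (b:ℕ) < r
        · rw [if_pos hbr]
        · rw [if_neg hbr, Nat.choose_eq_zero_of_lt (by omega : (b:ℕ)-r < (a:ℕ)-r)]
          push_cast
          ring
    rw [Matrix.det_of_upperTriangular htri]
    apply Finset.prod_eq_one
    intro a _
    simp only [hT, Matrix.of_apply]
    by_cases har : (a:ℕ) < r
    · rw [if_pos har, if_pos har, Nat.choose_self, Nat.sub_self]
      norm_num
    · rw [if_neg har, if_neg har, Nat.choose_self, Nat.sub_self]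
      norm_num
  have hdetMA : M.det = A.det := by
    rw [← hMT, Matrix.det_mul, hdetT, mul_one]
  -- Step 3 : block structure
  set e : Fin r ⊕ Fin s ≃ Fin N := finSumFinEquiv.trans (finCongr hrs) with he
  have he1 : ∀ i : Fin r, ((e (Sum.inl i)) : ℕ) = (i : ℕ) := fun i => rfl
  have he2 : ∀ a : Fin s, ((e (Sum.inr a)) : ℕ) = r + (a : ℕ) := fun a => rfl
  set B : Matrix (Fin s) (Fin s) ℝ := Matrix.of fun a b : Fin s =>
    (((r + (a:ℕ) + 1).choose (b:ℕ) : ℕ) : ℝ) * ((b:ℕ).factorial : ℝ) *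
      iteratedDeriv (r + (a:ℕ) + 1 - (b:ℕ)) f x₀ with hB
  set C : Matrix (Fin s) (Fin s) ℝ := Matrix.of fun a b : Fin s =>
    iteratedDeriv (r + (a:ℕ) + 1 - (b:ℕ)) f x₀ /
      ((r + (a:ℕ) + 1 - (b:ℕ)).factorial : ℝ) with hC
  have hblock : A.submatrix e e = Matrix.fromBlocks
      (Matrix.diagonal fun j : Fin r => (((j:ℕ)+1).factorial : ℝ))
      (Matrix.of fun (i : Fin r) (b : Fin s) => A (e (Sum.inl i)) (e (Sum.inr b)))
      0 B := by
    ext i j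
    cases i with
    | inl i =>
      cases j with
      | inl j =>
        simp only [Matrix.submatrix_apply, Matrix.fromBlocks_apply₁₁, hA, Matrix.of_apply,
          he1, Matrix.diagonal_apply]
        rw [if_pos (j.isLt : (j:ℕ) < r), key_pow]
        by_cases hij : i = j
        · subst hij
          rw [if_pos rfl, if_pos rfl]
        · rw [if_neg hij, if_neg (fun hc : (i:ℕ)+1 = (j:ℕ)+1 => hij (Fin.ext (by omega)))]
      | inr b => rfl
    | inr a =>
      cases j with
      | inl j =>
        simp only [Matrix.submatrix_apply, Matrix.fromBlocks_apply₂₁, hA, Matrix.of_apply,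
          he1, he2, Matrix.zero_apply]
        rw [if_pos (j.isLt : (j:ℕ) < r), key_pow,
          if_neg (by omega : ¬ (r + (a:ℕ)) + 1 = (j:ℕ)+1)]
      | inr b =>
        simp only [Matrix.submatrix_apply, Matrix.fromBlocks_apply₂₂, hA, hB, Matrix.of_apply,
          he2]
        rw [if_neg (by omega : ¬ r + (b:ℕ) < r), Nat.add_sub_cancel_left,
          key x₀ (r + (a:ℕ) + 1) f hf' (b:ℕ),
          if_pos (by omega : (b:ℕ) ≤ r + (a:ℕ) + 1)]
  have h5 : A.det = (∏ j : Fin r, (((j:ℕ)+1).factorial : ℝ)) * B.det := by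
    rw [← Matrix.det_submatrix_equiv_self e A, hblock, Matrix.det_fromBlocks_zero₂₁,
      Matrix.det_diagonal]
  have hBC : B = Matrix.diagonal (fun a : Fin s => ((r + (a:ℕ) + 1).factorial : ℝ)) * C := by
    ext a b
    rw [Matrix.diagonal_mul]
    simp only [hB, hC, Matrix.of_apply]
    have hb : (b:ℕ) ≤ r + (a:ℕ) + 1 := by
      have := b.isLt
      omega
    have hfact : ((r + (a:ℕ) + 1).choose (b:ℕ) * (b:ℕ).factorial *
        (r + (a:ℕ) + 1 - (b:ℕ)).factorial : ℕ) = (r + (a:ℕ) + 1).factorial :=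
      Nat.choose_mul_factorial_mul_factorial hb
    have hfactR : (((r + (a:ℕ) + 1).choose (b:ℕ) : ℕ) : ℝ) * ((b:ℕ).factorial : ℝ) *
        ((r + (a:ℕ) + 1 - (b:ℕ)).factorial : ℝ) = ((r + (a:ℕ) + 1).factorial : ℝ) := by
      exact_mod_cast congrArg (Nat.cast : ℕ → ℝ) hfact
    have hne : ((r + (a:ℕ) + 1 - (b:ℕ)).factorial : ℝ) ≠ 0 :=
      Nat.cast_ne_zero.mpr (Nat.factorial_ne_zero _)
    field_simp
    linear_combination iteratedDeriv (r + (a:ℕ) + 1 - (b:ℕ)) f x₀ * hfactR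
  have h6 : B.det = (∏ a : Fin s, ((r + (a:ℕ) + 1).factorial : ℝ)) * C.det := by
    rw [hBC, Matrix.det_mul, Matrix.det_diagonal]
  have hCH : C = H.submatrix id (Fin.revPerm : Equiv.Perm (Fin s)) := by
    ext a b
    simp only [hC, hH, Matrix.submatrix_apply, id_eq, Fin.revPerm_apply, Matrix.of_apply]
    have hb := b.isLt
    have hidx : r + 2 - s + (a:ℕ) + ((Fin.rev b : Fin s) : ℕ) = r + (a:ℕ) + 1 - (b:ℕ) := by
      rw [Fin.val_rev]
      omega
    rw [hidx]
  have h7 : C.det = (-1 : ℝ) ^ (s * (s - 1) / 2) * H.det := by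
    rw [hCH, Matrix.det_permute', sign_revPerm]
    norm_num
  have hprod : (∏ j : Fin r, (((j:ℕ)+1).factorial : ℝ)) *
      (∏ a : Fin s, ((r + (a:ℕ) + 1).factorial : ℝ)) =
      ∏ k ∈ Finset.range N, ((k + 1).factorial : ℝ) := by
    rw [Fin.prod_univ_eq_prod_range (fun k : ℕ => ((k + 1).factorial : ℝ)) r,
      Fin.prod_univ_eq_prod_range (fun k : ℕ => ((r + k + 1).factorial : ℝ)) s,
      ← hrs, Finset.prod_range_add (fun k : ℕ => ((k + 1).factorial : ℝ)) r s]
  rw [hdetMA, h5, h6, h7, ← hprod]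
  ring
end
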